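/- The caustic relation: suppose (φ₀, α₀) and (φ₁, α₁) both lie on the graph of a differentiable invariant curve g of the billiard map, with DB(1, g'(φ₀)) parallel to (1, g'(φ₁)), where DB is the matrix (1/(R₁ sin α₁))[[L - R₀ sin α₀, L],[L - R₀ sin α₀ - R₁ sin α₁, L - R₁ sin α₁]], and -1 < g'(φ₀), g'(φ₁) < 1. Then R₀ sin α₀/(1 + g'(φ₀)) + R₁ sin α₁/(1 - g'(φ₁)) = L. -/
import Mathlib


/-- The caustic relation: if the tangent vector (1, g'(φ₀)) to the invariant
curve is sent by the billiard derivative to a positive multiple of (1, g'(φ₁)),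
then R₀ sin α₀/(1 + g₀') + R₁ sin α₁/(1 - g₁') = L. -/
theorem stmt_17 (R₀ R₁ L α₀ α₁ g₀' g₁' : ℝ)
    (hR₀ : 0 < R₀) (hR₁ : 0 < R₁) (hL : 0 < L)
    (hs₀ : 0 < Real.sin α₀) (hs₁ : 0 < Real.sin α₁)
    (hg₀ : -1 < g₀' ∧ g₀' < 1) (hg₁ : -1 < g₁' ∧ g₁' < 1)
    (hpar : ∃ c : ℝ, 0 < c ∧
      Matrix.mulVec
        ((R₁ * Real.sin α₁)⁻¹ •
          !![L - R₀ * Real.sin α₀, L;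
             L - R₀ * Real.sin α₀ - R₁ * Real.sin α₁, L - R₁ * Real.sin α₁])
        ![1, g₀'] = c • ![1, g₁']) :
    R₀ * Real.sin α₀ / (1 + g₀') + R₁ * Real.sin α₁ / (1 - g₁') = L := by
  obtain ⟨c, hc, heq⟩ := hpar
  set a := R₀ * Real.sin α₀ with ha
  set b := R₁ * Real.sin α₁ with hb
  have hbpos : 0 < b := mul_pos hR₁ hs₁
  have h0 := congrFun heq 0
  have h1 := congrFun heq 1
  simp [Matrix.mulVec, dotProduct, Matrix.smul_apply, Fin.sum_univ_two] at h0 h1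
  have e0 : (L - a) + L * g₀' = c * b := by
    field_simp at h0; linarith [h0]
  have e1 : (L - a - b) + (L - b) * g₀' = c * g₁' * b := by
    field_simp at h1; linarith [h1]
  have h1g₀ : 0 < 1 + g₀' := by linarith [hg₀.1]
  have h1g₁ : 0 < 1 - g₁' := by linarith [hg₁.2]
  have hD : c * b * (1 - g₁') = b * (1 + g₀') := by nlinarith [e0, e1]
  field_simp
  nlinarith [hD, e0, e1]
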